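/- arXiv:1905.04507 — 7 statements merged into one kernel-verified Lean document; each statement's English description precedes it below -/
import Mathlib

section
/- Let X be a complex topological vector space, Γ a set of continuous linear operators on X, and T a continuous linear operator on X with dense range that commutes with every element of Γ (i.e., T S = S T for all S ∈ Γ). Then for every diskcyclic vector x of Γ, the vector T x is also a diskcyclic vector of Γ. -/
def diskOrbit {𝕜 X : Type*} [NormedField 𝕜] [AddCommGroup X] [Module 𝕜 X] [TopologicalSpace X]
    (Γ : Set (X →L[𝕜] X)) (x : X) : Set X :=
  {y | ∃ α : 𝕜, ‖α‖ ≤ 1 ∧ ∃ S ∈ Γ, y = α • S x}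

theorem image_diskOrbit_subset {𝕜 X : Type*} [NormedField 𝕜] [AddCommGroup X] [Module 𝕜 X]
    [TopologicalSpace X] {Γ : Set (X →L[𝕜] X)} {T : X →L[𝕜] X}
    (hcomm : ∀ S ∈ Γ, T ∘L S = S ∘L T) (x : X) :
    T '' diskOrbit Γ x ⊆ diskOrbit Γ (T x) := by
  rintro _ ⟨_, ⟨α, hα, S, hS, rfl⟩, rfl⟩
  refine ⟨α, hα, S, hS, ?_⟩
  rw [map_smul, ← ContinuousLinearMap.comp_apply, hcomm S hS, ContinuousLinearMap.comp_apply]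

theorem stmt_1_general {X : Type*} [AddCommGroup X] [Module ℂ X] [TopologicalSpace X]
    (Γ : Set (X →L[ℂ] X)) (T : X →L[ℂ] X) (hT : DenseRange ⇑T)
    (hcomm : ∀ S ∈ Γ, T ∘L S = S ∘L T) (x : X)
    (hx : Dense {y : X | ∃ α : ℂ, ‖α‖ ≤ 1 ∧ ∃ S ∈ Γ, y = α • S x}) :
    Dense {y : X | ∃ α : ℂ, ‖α‖ ≤ 1 ∧ ∃ S ∈ Γ, y = α • S (T x)} :=
  (hT.dense_image T.continuous hx).mono (image_diskOrbit_subset hcomm x)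

/-- If `T` is a continuous linear operator with dense range commuting with every element
of `Γ`, then `T` maps diskcyclic vectors of `Γ` to diskcyclic vectors of `Γ`. -/
theorem stmt_1 {X : Type*} [AddCommGroup X] [Module ℂ X] [TopologicalSpace X]
    [IsTopologicalAddGroup X] [ContinuousSMul ℂ X]
    (Γ : Set (X →L[ℂ] X)) (T : X →L[ℂ] X) (hT : DenseRange ⇑T)
    (hcomm : ∀ S ∈ Γ, T ∘L S = S ∘L T) (x : X)
    (hx : Dense {y : X | ∃ α : ℂ, ‖α‖ ≤ 1 ∧ ∃ S ∈ Γ, y = α • S x}) :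
    Dense {y : X | ∃ α : ℂ, ‖α‖ ≤ 1 ∧ ∃ S ∈ Γ, y = α • S (T x)} :=
  stmt_1_general Γ T hT hcomm x hx
end

section
/- Let X be a second countable Baire complex topological vector space and Γ a set of continuous linear operators on X. Suppose Γ satisfies the diskcyclicity criterion: there exist dense subsets X₀ and Y₀ of X, a sequence (α_k) in 𝔻 \ {0}, a sequence (T_k) of operators in Γ, and a sequence of maps S_k : Y₀ → X such that (i) α_k T_k x → 0 for all x ∈ X₀; (ii) α_k⁻¹ S_k y → 0 for all y ∈ Y₀; (iii) T_k S_k y → y for all y ∈ Y₀. Then the set 𝔻C(Γ) of diskcyclic vectors for Γ is dense in X; in particular, Γ is diskcyclic. -/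
/-!
The diskcyclicity criterion says that the maps `L k = α k • T k` satisfy the Gethner–Shapiro
universality criterion, with right inverses `(α k)⁻¹ • S k` on `Y₀`. For `x ∈ X₀ ∩ U` and
`y ∈ Y₀ ∩ V` the point `x + (α k)⁻¹ • S k y` lies in `U` for large `k` while its image under
`L k` approaches `y`, so the family `L` is topologically transitive. By Birkhoff's argument,
for a countable basis `B` the sets `⋃ k, L k ⁻¹' V`, `V ∈ B`, are open and dense, and their
intersection, dense by the Baire property, consists of points whose `L`-orbit meets every basic
open set. Such an orbit lies in the disk orbit.
-/

open Filter Topology Set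

section Transitivity

variable {X ι : Type*} [TopologicalSpace X]

def IsTopologicallyTransitive (f : ι → X → X) : Prop :=
  ∀ U V : Set X, IsOpen U → IsOpen V → U.Nonempty → V.Nonempty → ∃ i, (U ∩ f i ⁻¹' V).Nonempty

theorem dense_setOf_denseRange_of_isTopologicallyTransitive
    [SecondCountableTopology X] [BaireSpace X] {f : ι → X → X} (hf : ∀ i, Continuous (f i))
    (htrans : IsTopologicallyTransitive f) :
    Dense {x | DenseRange fun i => f i x} := by
  obtain ⟨B, hBc, hBne, hB⟩ := TopologicalSpace.exists_countable_basis X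
  have hopen : ∀ V ∈ B, IsOpen (⋃ i, f i ⁻¹' V) := fun V hV =>
    isOpen_iUnion fun i => (hB.isOpen hV).preimage (hf i)
  have hdense : ∀ V ∈ B, Dense (⋃ i, f i ⁻¹' V) := by
    intro V hV
    refine dense_iff_inter_open.2 fun U hU hUne => ?_
    have hVne : V.Nonempty := nonempty_iff_ne_empty.2 (ne_of_mem_of_not_mem hV hBne)
    obtain ⟨i, x, hxU, hxV⟩ := htrans U V hU (hB.isOpen hV) hUne hVne
    exact ⟨x, hxU, mem_iUnion.2 ⟨i, hxV⟩⟩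
  refine (dense_biInter_of_isOpen hopen hBc hdense).mono fun x hx => hB.dense_iff.2 ?_
  intro V hV _
  obtain ⟨i, hi⟩ := mem_iUnion.1 (mem_iInter₂.1 hx V hV)
  exact ⟨f i x, hi, i, rfl⟩

theorem isTopologicallyTransitive_of_universality_criterion [AddCommMonoid X] [ContinuousAdd X]
    {l : Filter ι} [l.NeBot] (L : ι → X →+ X) {X₀ Y₀ : Set X} (hX₀ : Dense X₀) (hY₀ : Dense Y₀)
    (R : ι → X → X) (hL : ∀ x ∈ X₀, Tendsto (fun i => L i x) l (𝓝 0))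
    (hR : ∀ y ∈ Y₀, Tendsto (fun i => R i y) l (𝓝 0))
    (hLR : ∀ y ∈ Y₀, Tendsto (fun i => L i (R i y)) l (𝓝 y)) :
    IsTopologicallyTransitive fun i => ⇑(L i) := by
  intro U V hU hV hUne hVne
  obtain ⟨x, hxX₀, hxU⟩ := hX₀.exists_mem_open hU hUne
  obtain ⟨y, hyY₀, hyV⟩ := hY₀.exists_mem_open hV hVne
  have hnear : Tendsto (fun i => x + R i y) l (𝓝 x) := by
    simpa using (hR y hyY₀).const_add x
  have himage : Tendsto (fun i => L i (x + R i y)) l (𝓝 y) := by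
    simpa using (hL x hxX₀).add (hLR y hyY₀)
  obtain ⟨i, hiU, hiV⟩ :=
    ((hnear.eventually_mem (hU.mem_nhds hxU)).and (himage.eventually_mem (hV.mem_nhds hyV))).exists
  exact ⟨i, x + R i y, hiU, hiV⟩

end Transitivity

/-- If a set `Γ` of operators on a second countable Baire complex topological vector
space satisfies the diskcyclicity criterion, then the set of diskcyclic vectors of `Γ`
is dense; in particular `Γ` is diskcyclic. -/
theorem stmt_11 {X : Type*} [AddCommGroup X] [Module ℂ X] [TopologicalSpace X]
    [IsTopologicalAddGroup X] [ContinuousSMul ℂ X] [SecondCountableTopology X]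
    [BaireSpace X] (Γ : Set (X →L[ℂ] X))
    (X₀ Y₀ : Set X) (hX₀ : Dense X₀) (hY₀ : Dense Y₀)
    (α : ℕ → ℂ) (hα : ∀ k, α k ≠ 0 ∧ ‖α k‖ ≤ 1)
    (T : ℕ → X →L[ℂ] X) (hT : ∀ k, T k ∈ Γ)
    (S : ℕ → X → X)
    (h1 : ∀ x ∈ X₀, Filter.Tendsto (fun k => α k • T k x) Filter.atTop (nhds 0))
    (h2 : ∀ y ∈ Y₀, Filter.Tendsto (fun k => (α k)⁻¹ • S k y) Filter.atTop (nhds 0))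
    (h3 : ∀ y ∈ Y₀, Filter.Tendsto (fun k => T k (S k y)) Filter.atTop (nhds y)) :
    Dense {x : X | Dense {y : X | ∃ a : ℂ, ‖a‖ ≤ 1 ∧ ∃ A ∈ Γ, y = a • A x}} ∧
    ∃ x : X, Dense {y : X | ∃ a : ℂ, ‖a‖ ≤ 1 ∧ ∃ A ∈ Γ, y = a • A x} := by
  let L : ℕ → X →+ X := fun k => α k • (T k : X →+ X)
  have hLS : ∀ y ∈ Y₀, Tendsto (fun k => L k ((α k)⁻¹ • S k y)) atTop (𝓝 y) := fun y hy =>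
    (h3 y hy).congr fun k => by
      simp [L, map_smul, smul_smul, mul_inv_cancel₀ (hα k).1]
  have htrans := isTopologicallyTransitive_of_universality_criterion L hX₀ hY₀
    (fun k => (α k)⁻¹ • S k) h1 h2 hLS
  have hdense := dense_setOf_denseRange_of_isTopologicallyTransitive
    (fun k => (T k).continuous.const_smul (α k)) htrans
  have hdisk : Dense {x : X | Dense {y : X | ∃ a : ℂ, ‖a‖ ≤ 1 ∧ ∃ A ∈ Γ, y = a • A x}} :=
    hdense.mono fun x hx => hx.mono <| range_subset_iff.2 fun k => ⟨α k, (hα k).2, T k, hT k, rfl⟩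
  exact ⟨hdisk, hdisk.nonempty⟩
end

section
/- Let X be a Hausdorff complex topological vector space with 2 ≤ dim X < ∞. Then X supports no diskcyclic strongly continuous semigroup: for every C₀-semigroup (T_t)_{t ≥ 0} on X and every x ∈ X, the disk orbit {α T_t x : α ∈ 𝔻, t ≥ 0} is not dense in X. -/
/-!
Dualising, the commuting operators `T t` have a common invariant flag of length two: linearly
independent functionals `φ, ψ` with `φ ∘ T t = a t • φ` and `ψ ∘ T t = b t • ψ + c t • φ`.
If `φ x = 0`, the disk orbit of `x` lies in `ker φ`. Otherwise the ratio
`F t = ψ (T t x) / φ (T t x)` does not see the scalar `α`, so a dense disk orbit would give `F`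
dense range in `ℂ`. But `F (t + s) = A t * F s + B t`: `F` is the orbit of a commuting continuous
semigroup of affine maps of `ℂ`, hence either a ray (`A = 1`) or of the form `w + κ * A t` with
`A` continuous and multiplicative, so `‖A t‖ = ‖A 1‖ ^ t`; neither is dense.
-/

open scoped NNReal
open Filter Topology Module

namespace Module.End

variable {ι K V : Type*} [Field K] [IsAlgClosed K] [AddCommGroup V] [Module K V]
  [FiniteDimensional K V]

theorem exists_forall_apply_eq_smul_of_commute [Nontrivial V] (f : ι → End K V)
    (hf : ∀ i j, Commute (f i) (f j)) : ∃ v ≠ 0, ∀ i, ∃ a : K, f i v = a • v := by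
  -- A minimal nonzero subspace invariant under all `f i` lies in an eigenspace of each `f i`.
  obtain ⟨p, ⟨hp, hpf⟩, hmin⟩ := wellFounded_lt.has_min
    {p : Submodule K V | p ≠ ⊥ ∧ ∀ i, ∀ v ∈ p, f i v ∈ p} ⟨⊤, top_ne_bot, fun _ _ _ => trivial⟩
  obtain ⟨v, hvp, hv⟩ := p.exists_mem_ne_zero_of_ne_bot hp
  refine ⟨v, hv, fun i => ?_⟩
  have : Nontrivial p := Submodule.nontrivial_iff_ne_bot.2 hp
  obtain ⟨a, ha⟩ := exists_eigenvalue ((f i).restrict (hpf i))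
  obtain ⟨w, hw⟩ := ha.exists_hasEigenvector
  have hw' : f i w = a • (w : V) := congrArg Subtype.val hw.apply_eq_smul
  have hq : p ⊓ (f i).eigenspace a ∈ {p : Submodule K V | p ≠ ⊥ ∧ ∀ i, ∀ v ∈ p, f i v ∈ p} := by
    refine ⟨fun h => hw.2 ?_, fun j u hu => Submodule.mem_inf.2 ⟨hpf j u hu.1, ?_⟩⟩
    · simpa using (h ▸ ⟨w.2, mem_eigenspace_iff.2 hw'⟩ : (w : V) ∈ (⊥ : Submodule K V))
    · rw [mem_eigenspace_iff, ← Module.End.mul_apply, hf i j, Module.End.mul_apply,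
        mem_eigenspace_iff.1 hu.2, map_smul]
  have := (inf_le_left : p ⊓ (f i).eigenspace a ≤ p).eq_of_not_lt (hmin _ hq)
  rw [← this] at hvp
  exact ⟨a, mem_eigenspace_iff.1 hvp.2⟩

theorem exists_triangular_pair_of_commute (hV : 2 ≤ finrank K V) (f : ι → End K V)
    (hf : ∀ i j, Commute (f i) (f j)) :
    ∃ v w : V, v ≠ 0 ∧ w ∉ K ∙ v ∧ (∀ i, ∃ a : K, f i v = a • v) ∧
      ∀ i, ∃ b c : K, f i w = b • w + c • v := by
  have : Nontrivial V := Module.nontrivial_of_finrank_pos (R := K) (by omega)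
  obtain ⟨v, hv, hfv⟩ := exists_forall_apply_eq_smul_of_commute f hf
  set p := K ∙ v
  have hpf : ∀ i, p ≤ p.comap (f i) := fun i => by
    rw [Submodule.span_singleton_le_iff_mem, Submodule.mem_comap]
    obtain ⟨a, ha⟩ := hfv i
    exact ha ▸ Submodule.smul_mem _ a (Submodule.mem_span_singleton_self v)
  have : Nontrivial (V ⧸ p) := Submodule.Quotient.nontrivial_iff.2 fun h => by
    have h1 : finrank K p = 1 := finrank_span_singleton hv
    rw [h, finrank_top] at h1
    omega
  obtain ⟨w', hw', hfw⟩ := exists_forall_apply_eq_smul_of_commute (fun i => p.mapQ p (f i) (hpf i))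
    fun i j => by
      refine Submodule.linearMap_qext _ (LinearMap.ext fun u => ?_)
      simp only [LinearMap.comp_apply, Module.End.mul_apply, Submodule.mkQ_apply,
        Submodule.mapQ_apply]
      rw [← Module.End.mul_apply, (hf i j).eq, Module.End.mul_apply]
  obtain ⟨w, rfl⟩ := p.mkQ_surjective w'
  refine ⟨v, w, hv, fun h => hw' ((Submodule.Quotient.mk_eq_zero p).2 h), hfv, fun i => ?_⟩
  obtain ⟨b, hb⟩ := hfw i
  rw [Submodule.mkQ_apply, Submodule.mapQ_apply, ← Submodule.Quotient.mk_smul,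
    Submodule.Quotient.eq] at hb
  obtain ⟨c, hc⟩ := Submodule.mem_span_singleton.1 hb
  exact ⟨b, c, by rw [hc]; abel⟩

end Module.End

theorem NNReal.denseRange_nnratCast : DenseRange ((↑) : ℚ≥0 → ℝ≥0) := by
  refine dense_of_exists_between fun u v huv => ?_
  obtain ⟨q, huq, hqv⟩ := exists_rat_btwn (NNReal.coe_lt_coe.2 huv)
  have hq : ((q.toNNRat : ℝ≥0) : ℝ) = q := by
    rw [← NNReal.coe_toRealHom, map_nnratCast, ← Rat.cast_nnratCast,
      Rat.coe_toNNRat q (by exact_mod_cast u.2.trans huq.le)]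
  exact ⟨q.toNNRat, ⟨_, rfl⟩, by rwa [← NNReal.coe_lt_coe, hq], by rwa [← NNReal.coe_lt_coe, hq]⟩

theorem eq_smul_of_continuous_of_map_add {E : Type*} [AddCommGroup E] [Module ℝ E]
    [TopologicalSpace E] [ContinuousSMul ℝ E] [T2Space E] {f : ℝ≥0 → E} (hf : Continuous f)
    (hadd : ∀ s t, f (s + t) = f s + f t) (t : ℝ≥0) : f t = (t : ℝ) • f 1 := by
  have hcoe : ∀ q : ℚ≥0, ((q : ℝ≥0) : ℝ) = q := map_nnratCast NNReal.toRealHom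
  refine congrFun (NNReal.denseRange_nnratCast.equalizer (h := fun c : ℝ≥0 => (c : ℝ) • f 1)
    hf (NNReal.continuous_coe.smul continuous_const) (funext fun q => ?_)) t
  simpa [hcoe] using map_nnratCast_smul (AddMonoidHom.mk' f hadd) ℝ≥0 ℝ q 1

theorem ne_zero_of_map_add_eq_mul {M : Type*} [MonoidWithZero M] [NoZeroDivisors M]
    [Nontrivial M] [TopologicalSpace M] [T1Space M] {f : ℝ≥0 → M} (hf : Continuous f)
    (h0 : f 0 = 1) (hmul : ∀ s t, f (s + t) = f s * f t) (t : ℝ≥0) : f t ≠ 0 := by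
  have hpow : ∀ (s : ℝ≥0) (n : ℕ), f (n * s) = f s ^ n := by
    intro s n
    induction n with
    | zero => simpa using h0
    | succ n ih => rw [Nat.cast_succ, add_one_mul, hmul, ih, pow_succ]
  have hsmall : Tendsto (fun n : ℕ => f (t / n)) atTop (𝓝 1) :=
    h0 ▸ (hf.tendsto 0).comp (tendsto_const_div_atTop_nhds_zero_nat t)
  obtain ⟨n, hn, hne⟩ := ((eventually_ne_atTop 0).and (hsmall.eventually_ne one_ne_zero)).exists
  rw [← mul_div_cancel₀ t (Nat.cast_ne_zero.2 hn), hpow]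
  exact pow_ne_zero n hne

theorem not_denseRange_of_map_add_eq_mul {A : ℝ≥0 → ℂ} (hA : Continuous A) (h0 : A 0 = 1)
    (hmul : ∀ s t, A (s + t) = A s * A t) : ¬ DenseRange A := by
  have hA0 : ∀ t, ‖A t‖ ≠ 0 := fun t => norm_ne_zero_iff.2 (ne_zero_of_map_add_eq_mul hA h0 hmul t)
  have hlog : ∀ t : ℝ≥0, Real.log ‖A t‖ = t * Real.log ‖A 1‖ :=
    eq_smul_of_continuous_of_map_add (hA.norm.log hA0) fun s t => by
      rw [hmul, norm_mul, Real.log_mul (hA0 s) (hA0 t)]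
  intro hdense
  rcases le_total 0 (Real.log ‖A 1‖) with h1 | h1
  · obtain ⟨t, ht⟩ := Metric.denseRange_iff.1 hdense 0 1 one_pos
    have : 0 ≤ Real.log ‖A t‖ := hlog t ▸ mul_nonneg t.2 h1
    rw [Real.log_nonneg_iff (norm_pos_iff.2 (norm_ne_zero_iff.1 (hA0 t)))] at this
    rw [dist_zero_left] at ht
    linarith
  · obtain ⟨t, ht⟩ := Metric.denseRange_iff.1 hdense 2 1 one_pos
    have : Real.log ‖A t‖ ≤ 0 := hlog t ▸ mul_nonpos_of_nonneg_of_nonpos t.2 h1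
    rw [Real.log_nonpos_iff (norm_nonneg _)] at this
    have := norm_sub_norm_le (2 : ℂ) (A t)
    rw [← dist_eq_norm] at this
    norm_num at this
    linarith

theorem not_denseRange_add_smul (a b : ℂ) : ¬ DenseRange fun t : ℝ≥0 => a + (t : ℝ) • b := by
  intro hdense
  rcases eq_or_ne b 0 with rfl | hb
  · obtain ⟨t, ht⟩ := Metric.denseRange_iff.1 hdense (a + 1) 1 one_pos
    simp at ht
  · obtain ⟨t, ht⟩ := Metric.denseRange_iff.1 hdense (a - b) ‖b‖ (norm_pos_iff.2 hb)
    rw [dist_eq_norm, show a - b - (a + (t : ℝ) • b) = -((1 + t : ℝ) • b) by module, norm_neg,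
      norm_smul, Real.norm_of_nonneg (by positivity)] at ht
    nlinarith [norm_nonneg b, t.2]

theorem not_denseRange_of_map_add_eq_mul_add {F A B : ℝ≥0 → ℂ} (hF : Continuous F)
    (hFAB : ∀ t s, F (t + s) = A t * F s + B t) : ¬ DenseRange F := by
  intro hdense
  obtain ⟨G, hG⟩ : ∃ G : ℝ≥0 → ℂ, ∀ t, G t = F t - F 0 := ⟨_, fun _ => rfl⟩
  have hGA : ∀ t s, G (t + s) = A t * G s + G t := by
    intro t s
    have := hFAB t 0
    rw [add_zero] at this
    rw [hG, hG, hG, hFAB t s]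
    linear_combination -this
  have hGc : Continuous G := (continuous_congr hG).2 (hF.sub continuous_const)
  by_cases hA : ∀ t, A t = 1
  · have hlin := eq_smul_of_continuous_of_map_add hGc fun s t => by
      rw [hGA, hA, one_mul, add_comm]
    refine not_denseRange_add_smul (F 0) (G 1) ?_
    convert hdense using 2 with t
    rw [← hlin, hG]
    ring
  push Not at hA
  obtain ⟨t₀, ht₀⟩ := hA
  have hsub : A t₀ - 1 ≠ 0 := sub_ne_zero.2 ht₀
  -- The maps `z ↦ A t * z + B t` commute, hence share the fixed point of the one at `t₀`.
  obtain ⟨κ, hGκ⟩ : ∃ κ, ∀ t, G t = κ * (A t - 1) := by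
    refine ⟨G t₀ / (A t₀ - 1), fun t => ?_⟩
    have := hGA t t₀
    rw [add_comm, hGA t₀ t] at this
    rw [div_mul_eq_mul_div, eq_div_iff hsub]
    linear_combination this
  rcases eq_or_ne κ 0 with hκ | hκ
  · refine not_denseRange_add_smul (F 0) 0 ?_
    convert hdense using 2 with t
    have := hGκ t
    rw [hκ, zero_mul, hG, sub_eq_zero] at this
    simp [this]
  have hAG : ∀ t, A t = 1 + G t / κ := fun t => by rw [hGκ]; field_simp; ring
  refine not_denseRange_of_map_add_eq_mul (A := A) ?_ ?_ ?_ ?_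
  · exact (continuous_congr hAG).2 (continuous_const.add (hGc.div_const κ))
  · rw [hAG, hG, sub_self, zero_div, add_zero]
  · intro s t
    apply mul_left_cancel₀ hκ
    linear_combination -hGκ (s + t) + hGA s t + A s * hGκ t + hGκ s
  · have hsurj : Function.Surjective fun w => 1 + (w - F 0) / κ := fun z =>
      ⟨F 0 + κ * (z - 1), by field_simp; ring⟩
    convert hsurj.denseRange.comp hdense (by fun_prop) using 1
    exact funext fun t => (hAG t).trans (by rw [hG]; rfl)

section Semigroup

variable {X : Type*} [AddCommGroup X] [Module ℂ X] [TopologicalSpace X]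

theorem denseRange_div_of_dense_smul {ι : Type*} {φ ψ : X →L[ℂ] ℂ}
    (hφψ : ∀ z, ∃ y, φ y = 1 ∧ ψ y = z) {v : ι → X}
    (hv : Dense {y | ∃ α : ℂ, ∃ i, y = α • v i}) : DenseRange fun i => ψ (v i) / φ (v i) := by
  intro z
  obtain ⟨y, hy, rfl⟩ := hφψ z
  refine mem_closure_iff_nhds.2 fun V hV => ?_
  have hy0 : φ y ≠ 0 := hy ▸ one_ne_zero
  have hU : {w | ψ w / φ w ∈ V ∧ φ w ≠ 0} ∈ 𝓝 y := by
    have hcont : ContinuousAt (fun w => ψ w / φ w) y :=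
      ψ.continuous.continuousAt.div φ.continuous.continuousAt hy0
    exact inter_mem (hcont.preimage_mem_nhds (by rwa [hy, div_one]))
      (φ.continuous.continuousAt.eventually_ne hy0)
  obtain ⟨_, ⟨hwV, hw0⟩, α, i, rfl⟩ := mem_closure_iff_nhds.1 (hv y) _ hU
  rw [map_smul, smul_eq_mul] at hw0
  refine ⟨_, ?_, i, rfl⟩
  rwa [map_smul, map_smul, smul_eq_mul, smul_eq_mul,
    mul_div_mul_left _ _ (left_ne_zero_of_mul hw0)] at hwV

theorem ne_zero_of_forall_apply_eq_mul {T : ℝ≥0 → X →L[ℂ] X}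
    (hT0 : T 0 = ContinuousLinearMap.id ℂ X) (hTadd : ∀ t s : ℝ≥0, T (t + s) = T t ∘L T s)
    (hTcont : ∀ x : X, Continuous fun t : ℝ≥0 => T t x) {φ : X →L[ℂ] ℂ} {y : X} (hy : φ y = 1)
    {a : ℝ≥0 → ℂ} (ha : ∀ t x, φ (T t x) = a t * φ x) (t : ℝ≥0) : a t ≠ 0 := by
  have ha' : ∀ t, a t = φ (T t y) := fun t => by rw [ha, hy, mul_one]
  refine ne_zero_of_map_add_eq_mul ((continuous_congr ha').2 (φ.continuous.comp (hTcont y)))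
    ?_ (fun s t => ?_) t
  · rw [ha', hT0, ContinuousLinearMap.id_apply, hy]
  · rw [ha', hTadd, ContinuousLinearMap.comp_apply, ha, ← ha']

variable [IsTopologicalAddGroup X] [ContinuousSMul ℂ X] [T2Space X] [FiniteDimensional ℂ X]

theorem exists_triangular_functionals (hdim : 2 ≤ Module.finrank ℂ X) {T : ℝ≥0 → X →L[ℂ] X}
    (hTadd : ∀ t s : ℝ≥0, T (t + s) = T t ∘L T s) :
    ∃ (φ ψ : X →L[ℂ] ℂ) (a b c : ℝ≥0 → ℂ), (∀ z, ∃ y, φ y = 1 ∧ ψ y = z) ∧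
      ∀ t x, φ (T t x) = a t * φ x ∧ ψ (T t x) = b t * ψ x + c t * φ x := by
  have hcomm : ∀ s t, Commute (T s : X →ₗ[ℂ] X).dualMap (T t : X →ₗ[ℂ] X).dualMap := by
    intro s t
    ext φ x
    simp only [Module.End.mul_apply, LinearMap.dualMap_apply, ContinuousLinearMap.coe_coe,
      ← ContinuousLinearMap.comp_apply, ← hTadd, add_comm]
  obtain ⟨φ, ψ, hφ, hψ, hφT, hψT⟩ := Module.End.exists_triangular_pair_of_commute
    (by rwa [Subspace.dual_finrank_eq]) _ hcomm
  choose a ha using hφT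
  choose b c hbc using hψT
  obtain ⟨y₁, hy₁⟩ : ∃ y, φ y = 1 := by
    obtain ⟨y, hy⟩ := DFunLike.ne_iff.1 hφ
    exact ⟨(φ y)⁻¹ • y, by rw [map_smul, smul_eq_mul, inv_mul_cancel₀ hy]⟩
  obtain ⟨y₂, hy₂φ, hy₂ψ⟩ : ∃ y, φ y = 0 ∧ ψ y = 1 := by
    obtain ⟨y, hyφ, hyψ⟩ : ∃ y, φ y = 0 ∧ ψ y ≠ 0 := by
      by_contra! h
      refine hψ ?_
      simpa using mem_span_of_iInf_ker_le_ker (L := fun _ : Unit => φ) (K := ψ)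
        fun y hy => LinearMap.mem_ker.2 (h y (by simpa using hy))
    exact ⟨(ψ y)⁻¹ • y, by simp [hyφ], by rw [map_smul, smul_eq_mul, inv_mul_cancel₀ hyψ]⟩
  refine ⟨LinearMap.toContinuousLinearMap φ, LinearMap.toContinuousLinearMap ψ, a, b, c,
    fun z => ⟨y₁ + (z - ψ y₁) • y₂, ?_⟩, fun t x => ⟨?_, ?_⟩⟩
  · simp [hy₁, hy₂φ, hy₂ψ]
  · simpa using LinearMap.congr_fun (ha t) x
  · simpa using LinearMap.congr_fun (hbc t) x

end Semigroup

/-- A Hausdorff complex topological vector space `X` with `2 ≤ dim X < ∞` supports no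
diskcyclic strongly continuous semigroup of operators. -/
theorem stmt_12 {X : Type*} [AddCommGroup X] [Module ℂ X] [TopologicalSpace X]
    [IsTopologicalAddGroup X] [ContinuousSMul ℂ X] [T2Space X]
    [FiniteDimensional ℂ X] (hdim : 2 ≤ Module.finrank ℂ X)
    (T : ℝ≥0 → X →L[ℂ] X)
    (hT0 : T 0 = ContinuousLinearMap.id ℂ X)
    (hTadd : ∀ t s : ℝ≥0, T (t + s) = T t ∘L T s)
    (hTcont : ∀ x : X, Continuous fun t : ℝ≥0 => T t x) :
    ∀ x : X, ¬ Dense {y : X | ∃ α : ℂ, ‖α‖ ≤ 1 ∧ ∃ t : ℝ≥0, y = α • T t x} := by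
  intro x hD
  obtain ⟨φ, ψ, a, b, c, hφψ, hT⟩ := exists_triangular_functionals hdim hTadd
  obtain ⟨y, hy, -⟩ := hφψ 0
  have ha := ne_zero_of_forall_apply_eq_mul hT0 hTadd hTcont hy fun t x => (hT t x).1
  by_cases hx : φ x = 0
  · have hker : {y : X | ∃ α : ℂ, ‖α‖ ≤ 1 ∧ ∃ t : ℝ≥0, y = α • T t x} ⊆ {y | φ y = 0} := by
      rintro _ ⟨α, -, t, rfl⟩
      simp [(hT t x).1, hx]
    have := closure_minimal hker (isClosed_eq φ.continuous continuous_const) (hD y)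
    exact one_ne_zero (hy.symm.trans this)
  have hφx : ∀ t, φ (T t x) ≠ 0 := fun t => by rw [(hT t x).1]; exact mul_ne_zero (ha t) hx
  refine not_denseRange_of_map_add_eq_mul_add (F := fun t => ψ (T t x) / φ (T t x))
    (A := fun t => b t / a t) (B := fun t => c t / a t)
    ((ψ.continuous.comp (hTcont x)).div (φ.continuous.comp (hTcont x)) hφx) (fun t s => ?_)
    (denseRange_div_of_dense_smul hφψ (hD.mono ?_))
  · rw [hTadd, ContinuousLinearMap.comp_apply, (hT t _).1, (hT t _).2]
    field_simp [ha t, hφx s]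
  · rintro _ ⟨α, -, t, rfl⟩
    exact ⟨α, t, rfl⟩
end

section
/- Let (T_t)_{t ≥ 0} be a strongly continuous semigroup of operators on a separable infinite-dimensional complex Banach space X. The following assertions are equivalent: (1) (T_t)_{t ≥ 0} is diskcyclic; (2) for all y, z ∈ X and all ε > 0 there exist v ∈ X, t > 0 and α ∈ 𝔻 such that ‖y − v‖ < ε and ‖z − α T_t v‖ < ε; (3) for all y, z ∈ X, all ε > 0 and all l ≥ 0, there exist v ∈ X, t > l and α ∈ 𝔻 such that ‖y − v‖ < ε and ‖z − α T_t v‖ < ε. -/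
open scoped NNReal
open Metric Set TopologicalSpace

/-!
(2) ⇒ (1) is Birkhoff's transitivity argument: for a countable basis `(V n)`, the points whose
disk orbit meets `V n` form a dense open set, and any point of the intersection of these sets
(Baire) is diskcyclic.

(1) ⇒ (3): in infinite dimensions the compact set `{α • T t x | ‖α‖ ≤ 1, t ≤ L}` has empty
interior, so every tail of a dense disk orbit is still dense, and so is its image under a
shrinking of the disk. Approximate `y` by `v = a • T s x` with `a ≠ 0`, then `z` by
`b • T (t + s) x` with `‖b‖ ≤ ‖a‖` and `t > l`; then `α = b / a` works.
-/

theorem exists_dense_orbit_of_transitive {X ι : Type*} [TopologicalSpace X] [Nonempty X]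
    [BaireSpace X] [SecondCountableTopology X] {F : ι → X → X} (hF : ∀ i, Continuous (F i))
    (htrans : ∀ U V : Set X, IsOpen U → IsOpen V → U.Nonempty → V.Nonempty →
      ∃ i, (U ∩ F i ⁻¹' V).Nonempty) :
    ∃ x, Dense (range fun i => F i x) := by
  obtain ⟨B, hBc, hBne, hB⟩ := exists_countable_basis X
  have hopen : ∀ V ∈ B, IsOpen (⋃ i, F i ⁻¹' V) := fun V hV =>
    isOpen_iUnion fun i => (hB.isOpen hV).preimage (hF i)
  have hdense : ∀ V ∈ B, Dense (⋃ i, F i ⁻¹' V) := by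
    refine fun V hV => dense_iff_inter_open.2 fun U hU hUne => ?_
    obtain ⟨i, x, hxU, hxV⟩ :=
      htrans U V hU (hB.isOpen hV) hUne (nonempty_iff_ne_empty.2 fun h => hBne (h ▸ hV))
    exact ⟨x, hxU, mem_iUnion.2 ⟨i, hxV⟩⟩
  obtain ⟨x, hx⟩ := (dense_biInter_of_isOpen hopen hBc hdense).nonempty
  refine ⟨x, hB.dense_iff.2 fun V hV _ => ?_⟩
  obtain ⟨i, hi⟩ := mem_iUnion.1 (mem_iInter₂.1 hx V hV)
  exact ⟨F i x, hi, i, rfl⟩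

section DiskOrbit

variable {𝕜 E : Type*} [NontriviallyNormedField 𝕜] [NormedAddCommGroup E] [NormedSpace 𝕜 E]

theorem IsCompact.interior_eq_empty_of_not_finiteDimensional [CompleteSpace 𝕜]
    (hE : ¬FiniteDimensional 𝕜 E) {K : Set E} (hK : IsCompact K) : interior K = ∅ := by
  refine eq_empty_iff_forall_notMem.2 fun x hx => hE ?_
  exact .of_exists_totallyBounded_nhds 𝕜 ⟨x, K, mem_interior_iff_mem_nhds.1 hx, hK.totallyBounded⟩

theorem Dense.of_isCompact_union [CompleteSpace 𝕜] (hE : ¬FiniteDimensional 𝕜 E) {K S : Set E}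
    (hK : IsCompact K) (h : Dense (K ∪ S)) : Dense S := by
  have hKc : Dense Kᶜ :=
    interior_eq_empty_iff_dense_compl.1 (hK.interior_eq_empty_of_not_finiteDimensional hE)
  refine (h.inter_of_isOpen_right hKc hK.isClosed.isOpen_compl).mono ?_
  rintro x ⟨hx | hx, hxK⟩
  exacts [absurd hx hxK, hx]

variable (𝕜) in
def diskOrbitFrom (f : ℝ≥0 → E) (r : ℝ) (L : ℝ≥0) : Set E :=
  {y | ∃ α : 𝕜, ‖α‖ ≤ r ∧ ∃ t, L ≤ t ∧ y = α • f t}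

theorem diskOrbitFrom_one_zero (f : ℝ≥0 → E) :
    diskOrbitFrom 𝕜 f 1 0 = {y | ∃ α : 𝕜, ‖α‖ ≤ 1 ∧ ∃ t, y = α • f t} := by
  simp [diskOrbitFrom]

theorem Dense.diskOrbitFrom_of_pos {f : ℝ≥0 → E} {L : ℝ≥0} (h : Dense (diskOrbitFrom 𝕜 f 1 L))
    {r : ℝ} (hr : 0 < r) : Dense (diskOrbitFrom 𝕜 f r L) := by
  obtain ⟨c, hc0, hcr⟩ := NormedField.exists_norm_lt 𝕜 hr
  have hc : c ≠ 0 := norm_pos_iff.1 hc0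
  refine ((isHomeomorph_smul₀ hc).surjective.denseRange.dense_image
    (continuous_const_smul c) h).mono ?_
  rintro _ ⟨_, ⟨α, hα, t, ht, rfl⟩, rfl⟩
  refine ⟨c * α, ?_, t, ht, smul_smul c α (f t)⟩
  calc ‖c * α‖ = ‖c‖ * ‖α‖ := norm_mul c α
    _ ≤ ‖c‖ := mul_le_of_le_one_right hc0.le hα
    _ ≤ r := hcr.le

theorem Dense.diskOrbitFrom_tail [ProperSpace 𝕜] (hE : ¬FiniteDimensional 𝕜 E) {f : ℝ≥0 → E}
    (hf : Continuous f) (h : Dense (diskOrbitFrom 𝕜 f 1 0)) (L : ℝ≥0) :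
    Dense (diskOrbitFrom 𝕜 f 1 L) := by
  set K := (fun p : 𝕜 × ℝ≥0 => p.1 • f p.2) '' (closedBall 0 1 ×ˢ Icc 0 L)
  have hK : IsCompact K := ((isCompact_closedBall 0 1).prod isCompact_Icc).image
    (continuous_fst.smul (hf.comp continuous_snd))
  refine .of_isCompact_union hE hK (h.mono ?_)
  rintro _ ⟨α, hα, t, -, rfl⟩
  rcases le_total t L with htL | hLt
  · exact .inl ⟨(α, t), ⟨mem_closedBall_zero_iff.2 hα, zero_le, htL⟩, rfl⟩
  · exact .inr ⟨α, hα, t, hLt, rfl⟩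

theorem exists_approx_of_dense_diskOrbit [ProperSpace 𝕜] (hE : ¬FiniteDimensional 𝕜 E)
    {T : ℝ≥0 → E →L[𝕜] E} (hTadd : ∀ t s, T (t + s) = T t ∘L T s) {x : E}
    (hTx : Continuous fun t => T t x) (hx : Dense (diskOrbitFrom 𝕜 (T · x) 1 0))
    (y z : E) {ε : ℝ} (hε : 0 < ε) (l : ℝ≥0) :
    ∃ (v : E) (t : ℝ≥0) (α : 𝕜), l < t ∧ ‖α‖ ≤ 1 ∧ ‖y - v‖ < ε ∧ ‖z - α • T t v‖ < ε := by
  have : Nontrivial E := not_subsingleton_iff_nontrivial.1 fun _ => hE inferInstance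
  have := Module.punctured_nhds_neBot 𝕜 E (0 : E)
  obtain ⟨_, ⟨⟨a, -, s, -, rfl⟩, hne⟩, hy⟩ := (hx.sdiff_singleton 0).exists_dist_lt y hε
  have ha0 : a ≠ 0 := by rintro rfl; exact hne (zero_smul 𝕜 _)
  have htail : Dense (diskOrbitFrom 𝕜 (T · x) ‖a‖ (l + 1 + s)) :=
    (hx.diskOrbitFrom_tail hE hTx _).diskOrbitFrom_of_pos (norm_pos_iff.2 ha0)
  obtain ⟨_, ⟨b, hb, t', ht', rfl⟩, hz⟩ := htail.exists_dist_lt z hε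
  obtain ⟨c, rfl⟩ := exists_add_of_le ht'
  have hT : (b / a) • T (l + 1 + c) (a • T s x) = b • T (l + 1 + s + c) x := by
    rw [map_smul, smul_smul, div_mul_cancel₀ b ha0, add_right_comm _ s, hTadd (l + 1 + c) s]
    rfl
  refine ⟨a • T s x, l + 1 + c, b / a, ?_, ?_, by rwa [← dist_eq_norm], by rwa [hT, ← dist_eq_norm]⟩
  · exact (lt_add_one l).trans_le le_self_add
  · rw [norm_div]
    exact div_le_one_of_le₀ hb (norm_nonneg a)

theorem exists_dense_diskOrbit_of_approx [CompleteSpace E] [SeparableSpace E]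
    (T : ℝ≥0 → E →L[𝕜] E)
    (h : ∀ y z : E, ∀ ε : ℝ, 0 < ε → ∃ (v : E) (t : ℝ≥0) (α : 𝕜),
      ‖α‖ ≤ 1 ∧ ‖y - v‖ < ε ∧ ‖z - α • T t v‖ < ε) :
    ∃ x, Dense (diskOrbitFrom 𝕜 (T · x) 1 0) := by
  let F (i : closedBall (0 : 𝕜) 1 × ℝ≥0) (v : E) : E := (i.1 : 𝕜) • T i.2 v
  have htrans : ∀ U V : Set E, IsOpen U → IsOpen V → U.Nonempty → V.Nonempty →
      ∃ i, (U ∩ F i ⁻¹' V).Nonempty := by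
    rintro U V hU hV ⟨y, hy⟩ ⟨z, hz⟩
    obtain ⟨ε, hε, hyU⟩ := Metric.isOpen_iff.1 hU y hy
    obtain ⟨δ, hδ, hzV⟩ := Metric.isOpen_iff.1 hV z hz
    obtain ⟨v, t, α, hα, hyv, hzv⟩ := h y z (min ε δ) (lt_min hε hδ)
    refine ⟨(⟨α, mem_closedBall_zero_iff.2 hα⟩, t), v, hyU ?_, hzV ?_⟩
    · exact mem_ball_iff_norm'.2 (hyv.trans_le (min_le_left _ _))
    · exact mem_ball_iff_norm'.2 (hzv.trans_le (min_le_right _ _))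
  obtain ⟨x, hx⟩ := exists_dense_orbit_of_transitive (F := F)
    (fun i => (T i.2).continuous.const_smul (i.1 : 𝕜)) htrans
  refine ⟨x, hx.mono ?_⟩
  rintro _ ⟨⟨⟨α, hα⟩, t⟩, rfl⟩
  exact ⟨α, mem_closedBall_zero_iff.1 hα, t, zero_le, rfl⟩

end DiskOrbit

theorem stmt_14_general {X : Type*} [NormedAddCommGroup X] [NormedSpace ℂ X] [CompleteSpace X]
    [TopologicalSpace.SeparableSpace X] (hinf : ¬ FiniteDimensional ℂ X)
    (T : ℝ≥0 → X →L[ℂ] X)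
    (hTadd : ∀ t s : ℝ≥0, T (t + s) = T t ∘L T s)
    (hTcont : ∀ x : X, Continuous fun t : ℝ≥0 => T t x) :
    ((∃ x : X, Dense {y : X | ∃ α : ℂ, ‖α‖ ≤ 1 ∧ ∃ t : ℝ≥0, y = α • T t x}) ↔
      (∀ y z : X, ∀ ε : ℝ, 0 < ε → ∃ (v : X) (t : ℝ≥0) (α : ℂ), 0 < t ∧ ‖α‖ ≤ 1 ∧
        ‖y - v‖ < ε ∧ ‖z - α • T t v‖ < ε)) ∧
    ((∃ x : X, Dense {y : X | ∃ α : ℂ, ‖α‖ ≤ 1 ∧ ∃ t : ℝ≥0, y = α • T t x}) ↔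
      (∀ y z : X, ∀ ε : ℝ, 0 < ε → ∀ l : ℝ≥0, ∃ (v : X) (t : ℝ≥0) (α : ℂ),
        l < t ∧ ‖α‖ ≤ 1 ∧ ‖y - v‖ < ε ∧ ‖z - α • T t v‖ < ε)) := by
  simp only [← diskOrbitFrom_one_zero]
  have of_dense (x : X) (hx : Dense (diskOrbitFrom ℂ (T · x) 1 0)) :=
    exists_approx_of_dense_diskOrbit hinf hTadd (hTcont x) hx
  refine ⟨⟨fun ⟨x, hx⟩ y z ε hε => ?_,
      fun h => exists_dense_diskOrbit_of_approx T fun y z ε hε => ?_⟩,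
    ⟨fun ⟨x, hx⟩ y z ε hε => of_dense x hx y z hε,
      fun h => exists_dense_diskOrbit_of_approx T fun y z ε hε => ?_⟩⟩
  · exact of_dense x hx y z hε 0
  · obtain ⟨v, t, α, -, hv⟩ := h y z ε hε
    exact ⟨v, t, α, hv⟩
  · obtain ⟨v, t, α, -, hv⟩ := h y z ε hε 0
    exact ⟨v, t, α, hv⟩

/-- For a strongly continuous semigroup `(T t)` on a separable infinite-dimensional
complex Banach space, diskcyclicity is equivalent to each of two approximation
properties. -/
theorem stmt_14 {X : Type*} [NormedAddCommGroup X] [NormedSpace ℂ X] [CompleteSpace X]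
    [TopologicalSpace.SeparableSpace X] (hinf : ¬ FiniteDimensional ℂ X)
    (T : ℝ≥0 → X →L[ℂ] X)
    (hT0 : T 0 = ContinuousLinearMap.id ℂ X)
    (hTadd : ∀ t s : ℝ≥0, T (t + s) = T t ∘L T s)
    (hTcont : ∀ x : X, Continuous fun t : ℝ≥0 => T t x) :
    ((∃ x : X, Dense {y : X | ∃ α : ℂ, ‖α‖ ≤ 1 ∧ ∃ t : ℝ≥0, y = α • T t x}) ↔
      (∀ y z : X, ∀ ε : ℝ, 0 < ε → ∃ (v : X) (t : ℝ≥0) (α : ℂ), 0 < t ∧ ‖α‖ ≤ 1 ∧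
        ‖y - v‖ < ε ∧ ‖z - α • T t v‖ < ε)) ∧
    ((∃ x : X, Dense {y : X | ∃ α : ℂ, ‖α‖ ≤ 1 ∧ ∃ t : ℝ≥0, y = α • T t x}) ↔
      (∀ y z : X, ∀ ε : ℝ, 0 < ε → ∀ l : ℝ≥0, ∃ (v : X) (t : ℝ≥0) (α : ℂ),
        l < t ∧ ‖α‖ ≤ 1 ∧ ‖y - v‖ < ε ∧ ‖z - α • T t v‖ < ε)) :=
  stmt_14_general hinf T hTadd hTcont
end

section
/- Let (T_t)_{t ≥ 0} be a strongly continuous semigroup of operators on a separable infinite-dimensional complex Banach space X. Define X₀ = {x ∈ X : T_t x → 0 as t → ∞} and X_∞ = {x ∈ X : for every ε > 0 there exist w ∈ X, α ∈ 𝔻 and t > 0 with ‖w‖ < ε and ‖α T_t w − x‖ < ε}. If both X₀ and X_∞ are dense subsets of X, then (T_t)_{t ≥ 0} is diskcyclic. -/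
open scoped NNReal
open Filter Topology TopologicalSpace Set

/-!
By Birkhoff's transitivity argument (Baire category on a separable complete space) it suffices
that for nonempty open `U`, `V` some `α • T t` maps a point of `U` into `V`. Targets close to `0`
are reached with `α = 0`. Otherwise pick `y ∈ X₀` near a point of `U` and `u ∈ X_∞ \ {0}` in `V`,
and a tiny `w` with `α • T t w ≈ u`. Since `T` is uniformly bounded on compact time intervals
(Banach–Steinhaus), a tiny `w` can only reach the nonzero `u` at a large time `t`, where
`T t y ≈ 0`; so `y + w ∈ U` and `α • T t (y + w) ∈ V`.
-/

theorem exists_dense_range_of_transitive {ι X : Type*} [TopologicalSpace X] [BaireSpace X]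
    [SecondCountableTopology X] [Nonempty X] {f : ι → X → X} (hf : ∀ i, Continuous (f i))
    (htrans : ∀ U V : Set X, IsOpen U → U.Nonempty → IsOpen V → V.Nonempty →
      ∃ i, (U ∩ f i ⁻¹' V).Nonempty) :
    ∃ x, Dense (range fun i => f i x) := by
  set S := {V ∈ countableBasis X | V.Nonempty}
  have hopen : ∀ V ∈ S, IsOpen (⋃ i, f i ⁻¹' V) := fun V hV =>
    isOpen_iUnion fun i => (isOpen_of_mem_countableBasis hV.1).preimage (hf i)
  have hdense : ∀ V ∈ S, Dense (⋃ i, f i ⁻¹' V) := by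
    refine fun V hV => dense_iff_inter_open.2 fun U hU hUne => ?_
    obtain ⟨i, x, hxU, hxV⟩ := htrans U V hU hUne (isOpen_of_mem_countableBasis hV.1) hV.2
    exact ⟨x, hxU, mem_iUnion.2 ⟨i, hxV⟩⟩
  obtain ⟨x, hx⟩ := (dense_biInter_of_isOpen hopen
    ((countable_countableBasis X).mono fun _ h => h.1) hdense).nonempty
  refine ⟨x, (isBasis_countableBasis X).dense_iff.2 fun V hV hVne => ?_⟩
  obtain ⟨i, hi⟩ := mem_iUnion.1 (mem_iInter₂.1 hx V ⟨hV, hVne⟩)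
  exact ⟨f i x, hi, i, rfl⟩

theorem ContinuousLinearMap.exists_bound_of_isCompact {ι 𝕜 E F : Type*} [TopologicalSpace ι]
    [NontriviallyNormedField 𝕜] [SeminormedAddCommGroup E] [NormedSpace 𝕜 E] [CompleteSpace E]
    [SeminormedAddCommGroup F] [NormedSpace 𝕜 F] {T : ι → E →L[𝕜] F} {K : Set ι}
    (hK : IsCompact K) (hT : ∀ x, ContinuousOn (fun t => T t x) K) :
    ∃ C, ∀ t ∈ K, ‖T t‖ ≤ C := by
  obtain ⟨C, hC⟩ := banach_steinhaus (g := fun t : K => T t) fun x => by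
    obtain ⟨C, hC⟩ := hK.exists_bound_of_continuousOn (hT x)
    exact ⟨C, fun t => hC t t.2⟩
  exact ⟨C, fun t ht => hC ⟨t, ht⟩⟩

section Semigroup

variable {𝕜 X : Type*} [NontriviallyNormedField 𝕜] [NormedAddCommGroup X] [NormedSpace 𝕜 X]

theorem norm_smul_le_of_norm_le_one {α : 𝕜} (hα : ‖α‖ ≤ 1) (x : X) : ‖α • x‖ ≤ ‖x‖ :=
  (norm_smul_le α x).trans (mul_le_of_le_one_left (norm_nonneg x) hα)

variable [CompleteSpace X] {T : ℝ≥0 → X →L[𝕜] X}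

theorem exists_smul_apply_near_at_large_time {x : X} (hx₀ : x ≠ 0)
    (hT : ∀ y, Continuous fun t => T t y)
    (hx : ∀ ε > 0, ∃ (w : X) (α : 𝕜) (t : ℝ≥0), ‖α‖ ≤ 1 ∧ ‖w‖ < ε ∧ ‖α • T t w - x‖ < ε)
    (t₀ : ℝ≥0) {ε : ℝ} (hε : 0 < ε) :
    ∃ (w : X) (α : 𝕜) (t : ℝ≥0), ‖α‖ ≤ 1 ∧ t₀ < t ∧ ‖w‖ < ε ∧ ‖α • T t w - x‖ < ε := by
  obtain ⟨C, hC⟩ := ContinuousLinearMap.exists_bound_of_isCompact (isCompact_Icc (a := 0) (b := t₀))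
    fun y => (hT y).continuousOn
  have hC₀ : 0 ≤ C := (norm_nonneg _).trans (hC 0 ⟨le_rfl, zero_le⟩)
  set η := min ε (‖x‖ / (C + 1))
  have hη : 0 < η := lt_min hε (by positivity)
  obtain ⟨w, α, t, hα, hw, hwx⟩ := hx η hη
  refine ⟨w, α, t, hα, ?_, hw.trans_le (min_le_left _ _), hwx.trans_le (min_le_left _ _)⟩
  by_contra! ht
  have hsmall : ‖α • T t w‖ ≤ C * η := calc
    ‖α • T t w‖ ≤ ‖T t w‖ := norm_smul_le_of_norm_le_one hα _
    _ ≤ ‖T t‖ * ‖w‖ := (T t).le_opNorm w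
    _ ≤ C * η := mul_le_mul (hC t ⟨zero_le, ht⟩) hw.le (norm_nonneg _) hC₀
  have hηx : (C + 1) * η ≤ ‖x‖ := by
    rw [← le_div_iff₀' (by positivity)]; exact min_le_right _ _
  linarith [norm_le_norm_add_norm_sub (α • T t w) x]

theorem exists_smul_apply_mem_of_dense (hT : ∀ y, Continuous fun t => T t y)
    (hX₀ : Dense {x | Tendsto (fun t => T t x) atTop (𝓝 0)})
    (hX_inf : Dense {x | ∀ ε > 0, ∃ (w : X) (α : 𝕜) (t : ℝ≥0),
      ‖α‖ ≤ 1 ∧ ‖w‖ < ε ∧ ‖α • T t w - x‖ < ε})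
    {U V : Set X} (hU : IsOpen U) (hUne : U.Nonempty) (hV : IsOpen V) (hVne : V.Nonempty) :
    ∃ (α : 𝕜) (t : ℝ≥0), ‖α‖ ≤ 1 ∧ (U ∩ (fun x => α • T t x) ⁻¹' V).Nonempty := by
  obtain ⟨v, hvU⟩ := hUne
  obtain ⟨u, huV⟩ := hVne
  obtain ⟨δ, hδ, hδU⟩ := Metric.isOpen_iff.1 hU v hvU
  obtain ⟨ε, hε, hεV⟩ := Metric.isOpen_iff.1 hV u huV
  by_cases hu : ‖u‖ < ε
  · exact ⟨0, 0, by simp, v, hvU, hεV (by simpa [dist_eq_norm, norm_sub_rev] using hu)⟩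
  obtain ⟨u', hu'u, hu'⟩ := Metric.dense_iff.1 hX_inf u (ε / 2) (by positivity)
  rw [Metric.mem_ball, dist_eq_norm] at hu'u
  have hu'₀ : u' ≠ 0 := by
    rintro rfl
    rw [zero_sub, norm_neg] at hu'u
    linarith
  obtain ⟨y, hyv, hy⟩ := Metric.dense_iff.1 hX₀ v (δ / 2) (by positivity)
  rw [Metric.mem_ball, dist_eq_norm] at hyv
  obtain ⟨t₀, ht₀⟩ := eventually_atTop.1
    ((tendsto_zero_iff_norm_tendsto_zero.1 hy).eventually_lt_const (by positivity : 0 < ε / 4))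
  obtain ⟨w, α, t, hα, ht, hw, hwu'⟩ := exists_smul_apply_near_at_large_time hu'₀ hT hu' t₀
    (lt_min (by positivity) (by positivity) : 0 < min (δ / 2) (ε / 4))
  have hwδ : ‖w‖ < δ / 2 := hw.trans_le (min_le_left _ _)
  have hwu'ε : ‖α • T t w - u'‖ < ε / 4 := hwu'.trans_le (min_le_right _ _)
  have hTy : ‖α • T t y‖ < ε / 4 := (norm_smul_le_of_norm_le_one hα _).trans_lt (ht₀ t ht.le)
  refine ⟨α, t, hα, y + w, hδU ?_, hεV ?_⟩
  · rw [Metric.mem_ball, dist_eq_norm, add_sub_right_comm]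
    linarith [norm_add_le (y - v) w]
  · rw [Metric.mem_ball, dist_eq_norm]
    beta_reduce
    rw [map_add, smul_add,
      show α • T t y + α • T t w - u = α • T t y + (α • T t w - u') + (u' - u) by abel]
    linarith [norm_add₃_le (a := α • T t y) (b := α • T t w - u') (c := u' - u)]

end Semigroup

theorem stmt_15_general {X : Type*} [NormedAddCommGroup X] [NormedSpace ℂ X] [CompleteSpace X]
    [TopologicalSpace.SeparableSpace X]
    (T : ℝ≥0 → X →L[ℂ] X)
    (hTcont : ∀ x : X, Continuous fun t : ℝ≥0 => T t x)
    (hX0 : Dense {x : X | Filter.Tendsto (fun t : ℝ≥0 => T t x) Filter.atTop (nhds 0)})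
    (hXinf : Dense {x : X | ∀ ε : ℝ, 0 < ε → ∃ (w : X) (α : ℂ) (t : ℝ≥0),
      ‖α‖ ≤ 1 ∧ 0 < t ∧ ‖w‖ < ε ∧ ‖α • T t w - x‖ < ε}) :
    ∃ x : X, Dense {y : X | ∃ α : ℂ, ‖α‖ ≤ 1 ∧ ∃ t : ℝ≥0, y = α • T t x} := by
  have hX_inf : Dense {x | ∀ ε > 0, ∃ (w : X) (α : ℂ) (t : ℝ≥0),
      ‖α‖ ≤ 1 ∧ ‖w‖ < ε ∧ ‖α • T t w - x‖ < ε} := by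
    refine hXinf.mono fun x hx ε hε => ?_
    obtain ⟨w, α, t, hα, -, hw, hwx⟩ := hx ε hε
    exact ⟨w, α, t, hα, hw, hwx⟩
  obtain ⟨x, hx⟩ := exists_dense_range_of_transitive
    (f := fun i : Metric.closedBall (0 : ℂ) 1 × ℝ≥0 => fun x => (i.1 : ℂ) • T i.2 x)
    (fun i => (T i.2).continuous.const_smul _) fun U V hU hUne hV hVne => by
      obtain ⟨α, t, hα, hUV⟩ := exists_smul_apply_mem_of_dense hTcont hX0 hX_inf hU hUne hV hVne
      exact ⟨(⟨α, mem_closedBall_zero_iff.2 hα⟩, t), hUV⟩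
  refine ⟨x, hx.mono ?_⟩
  rintro _ ⟨⟨⟨α, hα⟩, t⟩, rfl⟩
  exact ⟨α, mem_closedBall_zero_iff.1 hα, t, rfl⟩

/-- If for a strongly continuous semigroup `(T t)` on a separable infinite-dimensional
complex Banach space both `X₀ = {x : T t x → 0}` and
`X_∞ = {x : ∀ ε > 0, ∃ w, α ∈ 𝔻, t > 0, ‖w‖ < ε ∧ ‖α • T t w - x‖ < ε}` are dense,
then `(T t)` is diskcyclic. -/
theorem stmt_15 {X : Type*} [NormedAddCommGroup X] [NormedSpace ℂ X] [CompleteSpace X]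
    [TopologicalSpace.SeparableSpace X] (hinf : ¬ FiniteDimensional ℂ X)
    (T : ℝ≥0 → X →L[ℂ] X)
    (hT0 : T 0 = ContinuousLinearMap.id ℂ X)
    (hTadd : ∀ t s : ℝ≥0, T (t + s) = T t ∘L T s)
    (hTcont : ∀ x : X, Continuous fun t : ℝ≥0 => T t x)
    (hX0 : Dense {x : X | Filter.Tendsto (fun t : ℝ≥0 => T t x) Filter.atTop (nhds 0)})
    (hXinf : Dense {x : X | ∀ ε : ℝ, 0 < ε → ∃ (w : X) (α : ℂ) (t : ℝ≥0),
      ‖α‖ ≤ 1 ∧ 0 < t ∧ ‖w‖ < ε ∧ ‖α • T t w - x‖ < ε}) :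
    ∃ x : X, Dense {y : X | ∃ α : ℂ, ‖α‖ ≤ 1 ∧ ∃ t : ℝ≥0, y = α • T t x} :=
  stmt_15_general T hTcont hX0 hXinf
end

section
/- Let (T_t)_{t ≥ 0} be a strongly continuous semigroup of operators on a second countable Baire complex topological vector space X. Then (T_t)_{t ≥ 0} is diskcyclic (i.e., the set {T_t : t ≥ 0} is diskcyclic) if and only if (T_t)_{t ≥ 0} is disk transitive (i.e., the set {T_t : t ≥ 0} is disk transitive). -/
/-!
Disk transitivity yields a dense disk orbit by the Baire category theorem: for each member `V` of a
countable basis, the points that some `α • T t` maps into `V` form a dense open set, and any point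
of the intersection of these sets has a dense disk orbit.

Conversely, let `x` have a dense disk orbit and pick `β • T s x ∈ U`. The compact set of the
`γ • T r x` with `‖γ‖ ≤ 1`, `r ≤ s` shrinks into any neighbourhood of `0` when scaled by small `θ`,
while `θ` times the disk orbit stays dense; so the tail `{γ • T r x : ‖γ‖ ≤ ‖β‖, s ≤ r}` is dense,
and a point `γ • T r x ∈ V` of it gives `T (r - s) ((γ / β) • β • T s x) ∈ V`. As `X` need not be
Hausdorff, shrinking into every neighbourhood of `0` only confines a set to `closure {0}`; this
closed subspace has empty interior unless `{0}` is dense, so all points are chosen outside it.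
-/

open scoped NNReal Pointwise

open Set Filter Topology

theorem mem_closure_singleton_of_forall_nhds_mem_closure {X : Type*} [TopologicalSpace X]
    [RegularSpace X] {x y : X} (h : ∀ s ∈ 𝓝 x, y ∈ closure s) : y ∈ closure {x} := by
  rw [R0Space.closure_singleton, Filter.mem_ker]
  intro s hs
  obtain ⟨t, ht, htc, hts⟩ := exists_mem_nhds_isClosed_subset hs
  exact hts (htc.closure_eq ▸ h t ht)

theorem exists_denseRange_of_forall_inter_preimage_nonempty {X ι : Type*} [TopologicalSpace X]
    [SecondCountableTopology X] [BaireSpace X] [Nonempty X] {f : ι → X → X}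
    (hf : ∀ i, Continuous (f i))
    (h : ∀ U V : Set X, IsOpen U → IsOpen V → U.Nonempty → V.Nonempty →
      ∃ i, (U ∩ f i ⁻¹' V).Nonempty) :
    ∃ x, DenseRange (f · x) := by
  obtain ⟨b, hbc, hb0, hb⟩ := TopologicalSpace.exists_countable_basis X
  have hopen : ∀ V ∈ b, IsOpen (⋃ i, f i ⁻¹' V) := fun V hV =>
    isOpen_iUnion fun i => (hb.isOpen hV).preimage (hf i)
  have hdense : ∀ V ∈ b, Dense (⋃ i, f i ⁻¹' V) := by
    intro V hV
    refine dense_iff_inter_open.2 fun U hU hUne => ?_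
    obtain ⟨i, u, hu, hfu⟩ := h U V hU (hb.isOpen hV) hUne
      (nonempty_iff_ne_empty.2 (ne_of_mem_of_not_mem hV hb0))
    exact ⟨u, hu, mem_iUnion.2 ⟨i, hfu⟩⟩
  obtain ⟨x, hx⟩ := (dense_biInter_of_isOpen hopen hbc hdense).nonempty
  refine ⟨x, hb.dense_iff.2 fun V hV _ => ?_⟩
  obtain ⟨i, hi⟩ := mem_iUnion.1 (mem_iInter₂.1 hx V hV)
  exact ⟨f i x, hi, i, rfl⟩

theorem exists_dense_diskOrbit_of_diskTransitive {𝕜 E ι : Type*} [NormedField 𝕜]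
    [AddCommGroup E] [Module 𝕜 E] [TopologicalSpace E] [ContinuousConstSMul 𝕜 E]
    [SecondCountableTopology E] [BaireSpace E] (T : ι → E →L[𝕜] E)
    (h : ∀ U V : Set E, IsOpen U → IsOpen V → U.Nonempty → V.Nonempty →
      ∃ α : 𝕜, α ≠ 0 ∧ ‖α‖ ≤ 1 ∧ ∃ i, (⇑(T i) '' (α • U) ∩ V).Nonempty) :
    ∃ x : E, Dense {y : E | ∃ α : 𝕜, ‖α‖ ≤ 1 ∧ ∃ i, y = α • T i x} := by
  obtain ⟨x, hx⟩ := exists_denseRange_of_forall_inter_preimage_nonempty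
    (f := fun p : Metric.closedBall (0 : 𝕜) 1 × ι => fun y => (p.1 : 𝕜) • T p.2 y)
    (fun p => (T p.2).continuous.const_smul _) fun U V hU hV hUne hVne => by
      obtain ⟨α, -, hα, i, _, ⟨_, ⟨u, hu, rfl⟩, rfl⟩, hV⟩ := h U V hU hV hUne hVne
      exact ⟨(⟨α, mem_closedBall_zero_iff.2 hα⟩, i), u, hu, by simpa using hV⟩
  refine ⟨x, hx.mono ?_⟩
  rintro _ ⟨⟨⟨α, hα⟩, i⟩, rfl⟩
  exact ⟨α, mem_closedBall_zero_iff.1 hα, i, rfl⟩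

section TopologicalVectorSpace

variable {E : Type*} [AddCommGroup E] [TopologicalSpace E] [IsTopologicalAddGroup E]

theorem IsOpen.nonempty_diff_closure_zero (𝕜 : Type*) [NontriviallyNormedField 𝕜] [Module 𝕜 E]
    [ContinuousSMul 𝕜 E] (hZ : ¬Dense ({0} : Set E)) {U : Set E}
    (hU : IsOpen U) (hne : U.Nonempty) : (U \ closure {0}).Nonempty := by
  by_contra hempty
  rw [not_nonempty_iff_eq_empty, sdiff_eq_empty] at hempty
  have hZ' : ((⊥ : Submodule 𝕜 E).topologicalClosure : Set E) = closure {0} := by simp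
  have htop := (⊥ : Submodule 𝕜 E).topologicalClosure.eq_top_of_nonempty_interior'
    (hne.mono (interior_maximal (hZ' ▸ hempty) hU))
  exact hZ (dense_iff_closure_eq.2 (by rw [← hZ', htop, Submodule.top_coe]))

theorem Dense.of_eventually_dense_union (𝕜 : Type*) [NontriviallyNormedField 𝕜] [Module 𝕜 E]
    [ContinuousSMul 𝕜 E] (hZ : ¬Dense ({0} : Set E)) {ι : Type*}
    {l : Filter ι} [l.NeBot] {D : Set E} {K : ι → Set E}
    (hK : Tendsto K l (𝓝 0).smallSets) (hD : ∀ᶠ i in l, Dense (D ∪ K i)) : Dense D := by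
  have hsub : (closure D)ᶜ ⊆ closure {0} := by
    refine fun w hw => mem_closure_singleton_of_forall_nhds_mem_closure fun M hM => ?_
    obtain ⟨i, hKM, hDi⟩ := ((hK.eventually (eventually_smallSets_subset.2 hM)).and hD).exists
    have hw' : w ∈ closure D ∪ closure (K i) := by
      rw [← closure_union, hDi.closure_eq]; trivial
    exact closure_mono hKM (hw'.resolve_left hw)
  by_contra hD'
  obtain ⟨w, hw, hw0⟩ := isClosed_closure.isOpen_compl.nonempty_diff_closure_zero 𝕜 hZ
    (nonempty_compl.2 fun h => hD' (dense_iff_closure_eq.2 h))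
  exact hw0 (hsub hw)

variable {𝕜 : Type*} [NontriviallyNormedField 𝕜] [Module 𝕜 E] [ContinuousSMul 𝕜 E]

theorem dense_diskHull_tail [ProperSpace 𝕜] (hZ : ¬Dense ({0} : Set E)) {c : ℝ≥0 → E}
    (hc : Continuous c) (hdense : Dense {y | ∃ α : 𝕜, ‖α‖ ≤ 1 ∧ ∃ t, y = α • c t})
    {β : 𝕜} (hβ : β ≠ 0) (s : ℝ≥0) :
    Dense {y | ∃ γ : 𝕜, ‖γ‖ ≤ ‖β‖ ∧ ∃ r, s ≤ r ∧ y = γ • c r} := by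
  set C := (fun p : 𝕜 × ℝ≥0 => p.1 • c p.2) '' (Metric.closedBall 0 1 ×ˢ Icc 0 s)
  have hC : IsCompact C := ((isCompact_closedBall 0 1).prod isCompact_Icc).image
    (continuous_fst.smul (hc.comp continuous_snd))
  refine Dense.of_eventually_dense_union 𝕜 hZ (l := 𝓝[≠] 0)
    (((hC.isVonNBounded 𝕜).tendsto_smallSets_nhds).mono_left nhdsWithin_le_nhds) ?_
  filter_upwards [self_mem_nhdsWithin,
    nhdsWithin_le_nhds (Metric.closedBall_mem_nhds 0 (norm_pos_iff.2 hβ))] with θ (hθ : θ ≠ 0) hθβ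
  refine (hdense.smul (Units.mk0 θ hθ)).mono ?_
  rintro _ ⟨_, ⟨α, hα, t, rfl⟩, rfl⟩
  change θ • α • c t ∈ _
  rw [smul_smul]
  rcases le_total s t with hst | hts
  · refine Or.inl ⟨θ * α, ?_, t, hst, rfl⟩
    rw [norm_mul]
    exact mul_le_of_le_one_right (norm_nonneg θ) hα |>.trans (mem_closedBall_zero_iff.1 hθβ)
  · rw [← smul_smul]
    exact Or.inr (smul_mem_smul_set ⟨(α, t), ⟨mem_closedBall_zero_iff.2 hα, zero_le, hts⟩, rfl⟩)

theorem exists_smul_image_inter_nonempty_of_dense_diskOrbit [ProperSpace 𝕜]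
    {T : ℝ≥0 → E →L[𝕜] E} (hTadd : ∀ t s : ℝ≥0, T (t + s) = T t ∘L T s)
    (hTcont : ∀ x : E, Continuous fun t : ℝ≥0 => T t x) {x : E}
    (hx : Dense {y : E | ∃ α : 𝕜, ‖α‖ ≤ 1 ∧ ∃ t : ℝ≥0, y = α • T t x})
    {U V : Set E} (hU : IsOpen U) (hV : IsOpen V) (hUne : U.Nonempty) (hVne : V.Nonempty) :
    ∃ α : 𝕜, α ≠ 0 ∧ ‖α‖ ≤ 1 ∧ ∃ t : ℝ≥0, (⇑(T t) '' (α • U) ∩ V).Nonempty := by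
  by_cases hZ : Dense ({0} : Set E)
  · have h0 : ∀ W : Set E, IsOpen W → W.Nonempty → (0 : E) ∈ W := fun W hW hWne =>
      (hZ.inter_open_nonempty W hW hWne).elim fun _ h => h.2 ▸ h.1
    exact ⟨1, one_ne_zero, norm_one.le, 0, 0, ⟨0, by simpa using h0 U hU hUne, map_zero _⟩,
      h0 V hV hVne⟩
  have hne_zero : ∀ {γ : 𝕜} {r : ℝ≥0}, γ • T r x ∉ closure {0} → γ ≠ 0 := by
    rintro γ r h rfl
    exact h (by simpa using subset_closure (mem_singleton (0 : E)))
  obtain ⟨_, ⟨hyU, hyZ⟩, β, -, s, rfl⟩ := hx.inter_open_nonempty _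
    (hU.sdiff isClosed_closure) (hU.nonempty_diff_closure_zero 𝕜 hZ hUne)
  have hβ := hne_zero hyZ
  obtain ⟨_, ⟨hzV, hzZ⟩, γ, hγβ, r, hsr, rfl⟩ :=
    (dense_diskHull_tail hZ (hTcont x) hx hβ s).inter_open_nonempty _
      (hV.sdiff isClosed_closure) (hV.nonempty_diff_closure_zero 𝕜 hZ hVne)
  refine ⟨γ / β, div_ne_zero (hne_zero hzZ) hβ, ?_, r - s, γ • T r x,
    ⟨_, smul_mem_smul_set hyU, ?_⟩, hzV⟩
  · rw [norm_div]
    exact div_le_one_of_le₀ hγβ (norm_nonneg β)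
  · rw [map_smul, map_smul, smul_smul, div_mul_cancel₀ γ hβ, ← ContinuousLinearMap.comp_apply,
      ← hTadd, tsub_add_cancel_of_le hsr]

end TopologicalVectorSpace

theorem stmt_16_general {X : Type*} [AddCommGroup X] [Module ℂ X] [TopologicalSpace X]
    [IsTopologicalAddGroup X] [ContinuousSMul ℂ X] [SecondCountableTopology X]
    [BaireSpace X]
    (T : ℝ≥0 → X →L[ℂ] X)
    (hTadd : ∀ t s : ℝ≥0, T (t + s) = T t ∘L T s)
    (hTcont : ∀ x : X, Continuous fun t : ℝ≥0 => T t x) :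
    (∃ x : X, Dense {y : X | ∃ α : ℂ, ‖α‖ ≤ 1 ∧ ∃ t : ℝ≥0, y = α • T t x}) ↔
    (∀ U V : Set X, IsOpen U → IsOpen V → U.Nonempty → V.Nonempty →
      ∃ α : ℂ, α ≠ 0 ∧ ‖α‖ ≤ 1 ∧ ∃ t : ℝ≥0, (⇑(T t) '' (α • U) ∩ V).Nonempty) :=
  ⟨fun ⟨_, hx⟩ _ _ hU hV hUne hVne =>
    exists_smul_image_inter_nonempty_of_dense_diskOrbit hTadd hTcont hx hU hV hUne hVne,
    exists_dense_diskOrbit_of_diskTransitive T⟩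

/-- A strongly continuous semigroup of operators on a second countable Baire complex
topological vector space is diskcyclic if and only if it is disk transitive. -/
theorem stmt_16 {X : Type*} [AddCommGroup X] [Module ℂ X] [TopologicalSpace X]
    [IsTopologicalAddGroup X] [ContinuousSMul ℂ X] [SecondCountableTopology X]
    [BaireSpace X]
    (T : ℝ≥0 → X →L[ℂ] X)
    (hT0 : T 0 = ContinuousLinearMap.id ℂ X)
    (hTadd : ∀ t s : ℝ≥0, T (t + s) = T t ∘L T s)
    (hTcont : ∀ x : X, Continuous fun t : ℝ≥0 => T t x) :
    (∃ x : X, Dense {y : X | ∃ α : ℂ, ‖α‖ ≤ 1 ∧ ∃ t : ℝ≥0, y = α • T t x}) ↔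
    (∀ U V : Set X, IsOpen U → IsOpen V → U.Nonempty → V.Nonempty →
      ∃ α : ℂ, α ≠ 0 ∧ ‖α‖ ≤ 1 ∧ ∃ t : ℝ≥0, (⇑(T t) '' (α • U) ∩ V).Nonempty) :=
  stmt_16_general T hTadd hTcont
end

section
/- Let X be an infinite-dimensional complex Banach space, C a continuous linear operator on X with dense range, and (S(z))_{z ∈ ℂ} an entire C-regularized group of operators on X which is diskcyclic, with diskcyclic vector x ∈ X. Then: (1) S(z) x ≠ 0 for all z ∈ ℂ; and (2) for every ω₀ ∈ ℂ, the set {α S(z) x : α ∈ 𝔻, z ∈ ℂ with |z| > |ω₀|} is dense in X. -/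
/-- If `x` is a diskcyclic vector for an entire `C`-regularized group `(S z)_{z ∈ ℂ}`
(with `C` of dense range) on an infinite-dimensional complex Banach space, then
`S z x ≠ 0` for all `z`, and for every `ω₀ ∈ ℂ` the set
`{α • S z x : α ∈ 𝔻, |z| > |ω₀|}` is dense. -/
theorem stmt_19 {X : Type*} [NormedAddCommGroup X] [NormedSpace ℂ X] [CompleteSpace X]
    (hinf : ¬ FiniteDimensional ℂ X)
    (C : X →L[ℂ] X) (hC : DenseRange ⇑C)
    (S : ℂ → X →L[ℂ] X)
    (hS0 : S 0 = C)
    (hSadd : ∀ z w : ℂ, S (z + w) ∘L C = S z ∘L S w)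
    (hSent : ∀ x : X, Differentiable ℂ fun z : ℂ => S z x)
    (x : X) (hx : Dense {y : X | ∃ α : ℂ, ‖α‖ ≤ 1 ∧ ∃ z : ℂ, y = α • S z x}) :
    (∀ z : ℂ, S z x ≠ 0) ∧
    ∀ ω₀ : ℂ, Dense {y : X | ∃ α : ℂ, ‖α‖ ≤ 1 ∧ ∃ z : ℂ, ‖ω₀‖ < ‖z‖ ∧ y = α • S z x} := by
  have hXnontriv : ¬ Subsingleton X := by
    intro h
    exact hinf (Module.finite_of_rank_eq_zero (by simp [rank_subsingleton']))
  constructor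
  · -- Part 1
    intro z₀ hz₀
    -- C (S w x) = 0 for all w
    have hCz : ∀ w : ℂ, C (S w x) = 0 := by
      intro w
      have h1 : S ((w - z₀) + z₀) (C x) = S (w - z₀) (S z₀ x) := by
        have := hSadd (w - z₀) z₀
        calc S ((w - z₀) + z₀) (C x) = (S ((w - z₀) + z₀) ∘L C) x := rfl
          _ = (S (w - z₀) ∘L S z₀) x := by rw [this]
          _ = S (w - z₀) (S z₀ x) := rfl
      have h2 : S w (C x) = 0 := by
        rw [show w = (w - z₀) + z₀ by ring, h1, hz₀, map_zero]
      have h3 : C (S w x) = S w (C x) := by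
        have := hSadd 0 w
        rw [zero_add, hS0] at this
        calc C (S w x) = (C ∘L S w) x := rfl
          _ = (S w ∘L C) x := by rw [this]
          _ = S w (C x) := rfl
      rw [h3, h2]
    -- image of the dense orbit under C is {0}, hence {0} is dense
    have hd : Dense (⇑C '' {y : X | ∃ α : ℂ, ‖α‖ ≤ 1 ∧ ∃ z : ℂ, y = α • S z x}) :=
      hC.dense_image C.continuous hx
    have hsub : (⇑C '' {y : X | ∃ α : ℂ, ‖α‖ ≤ 1 ∧ ∃ z : ℂ, y = α • S z x}) ⊆ {(0 : X)} := by
      rintro _ ⟨y, ⟨α, _, z, rfl⟩, rfl⟩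
      simp [map_smul, hCz z]
    have h0 : Dense ({(0 : X)} : Set X) := hd.mono hsub
    have : ∀ y : X, y = 0 := by
      intro y
      have := h0.closure_eq
      rw [closure_singleton] at this
      have : y ∈ ({(0 : X)} : Set X) := this ▸ Set.mem_univ y
      simpa using this
    exact hXnontriv ⟨fun a b => by rw [this a, this b]⟩
  · -- Part 2
    intro ω₀
    set r := ‖ω₀‖ with hr
    set K : Set X := (fun p : ℂ × ℂ => p.1 • S p.2 x) ''
      (Metric.closedBall 0 1 ×ˢ Metric.closedBall 0 r) with hKdef
    have hcont : Continuous (fun p : ℂ × ℂ => p.1 • S p.2 x) :=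
      continuous_fst.smul ((hSent x).continuous.comp continuous_snd)
    have hKcomp : IsCompact K :=
      ((isCompact_closedBall 0 1).prod (isCompact_closedBall 0 r)).image hcont
    have hKint : interior K = ∅ := by
      by_contra h
      obtain ⟨y, hy⟩ := Set.nonempty_iff_ne_empty.2 h
      obtain ⟨ε, hε, hball⟩ := Metric.isOpen_iff.1 isOpen_interior y hy
      have hsub : Metric.closedBall y (ε / 2) ⊆ K := fun z hz =>
        interior_subset (hball (lt_of_le_of_lt (Metric.mem_closedBall.1 hz) (by linarith)))
      have : IsCompact (Metric.closedBall y (ε / 2)) :=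
        hKcomp.of_isClosed_subset Metric.isClosed_closedBall hsub
      exact hinf (FiniteDimensional.of_isCompact_closedBall ℂ (by linarith) this)
    set B : Set X := {y : X | ∃ α : ℂ, ‖α‖ ≤ 1 ∧ ∃ z : ℂ, r < ‖z‖ ∧ y = α • S z x} with hBdef
    have hDsub : {y : X | ∃ α : ℂ, ‖α‖ ≤ 1 ∧ ∃ z : ℂ, y = α • S z x} ⊆ K ∪ B := by
      rintro y ⟨α, hα, z, rfl⟩
      rcases le_or_gt ‖z‖ r with hz | hz
      · exact Or.inl ⟨(α, z), ⟨by simpa [Metric.mem_closedBall] using hα,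
          by simpa [Metric.mem_closedBall] using hz⟩, rfl⟩
      · exact Or.inr ⟨α, hα, z, hz, rfl⟩
    have hunion : (Set.univ : Set X) ⊆ K ∪ closure B := by
      intro y _
      have : y ∈ closure (K ∪ B) := (closure_mono hDsub) (hx y)
      rwa [closure_union, hKcomp.isClosed.closure_eq] at this
    have hKc : Dense Kᶜ := interior_eq_empty_iff_dense_compl.1 hKint
    have hsubB : Kᶜ ⊆ closure B := by
      intro y hy
      rcases hunion (Set.mem_univ y) with h | h
      · exact absurd h hy
      · exact h
    have : Dense (closure B) := hKc.mono hsubB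
    rwa [dense_closure] at this
end
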